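/- For all positive integers m, n and every complex number t, the sum Σ_{H ≤ ℤ_m × ℤ_n} |H|^t over all subgroups H of ℤ_m × ℤ_n equals Σ_{d ∣ gcd(m,n)} φ(d)·d^t·σ_t(m/d)·σ_t(n/d), where σ_t(n) = Σ_{e ∣ n} e^t. -/

import Mathlib

/-!
A subgroup `H ≤ M × N` is determined by its projection `A` to `M`, its slice
`B = {y | (0, y) ∈ H}` in `N`, and the homomorphism `A → N ⧸ B` sending `x` to the class of any
`y` with `(x, y) ∈ H`; every such triple occurs, and `|H| = |A| |B|`. In a finite cyclic group the
subgroups correspond to the divisors of the order, and there are `gcd a b` homomorphisms from a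
cyclic group of order `a` to one of order `b`. Hence the sum equals
`∑_{u ∣ m} ∑_{v ∣ n} gcd(u, n / v) (u v)^t`; writing `gcd(u, w) = ∑_{d ∣ u, d ∣ w} φ(d)` and
collecting the multiples of `d` among the divisors of `m` and `n` gives the right-hand side.
-/

open Finset

instance AddMonoidHom.finite {G K : Type*} [AddZeroClass G] [AddZeroClass K] [Finite G]
    [Finite K] : Finite (G →+ K) :=
  Finite.of_injective _ DFunLike.coe_injective

namespace AddSubgroup

variable {M N : Type*} [AddCommGroup M] [AddCommGroup N]

def prodGraph (A : AddSubgroup M) (B : AddSubgroup N) (f : A →+ N ⧸ B) :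
    AddSubgroup (M × N) where
  carrier := {p | ∃ a : A, (a : M) = p.1 ∧ (p.2 : N ⧸ B) = f a}
  zero_mem' := ⟨0, rfl, by simp⟩
  add_mem' := by
    rintro ⟨-, y⟩ ⟨-, y'⟩ ⟨a, rfl, ha⟩ ⟨a', rfl, ha'⟩
    exact ⟨a + a', rfl, by simp [ha, ha']⟩
  neg_mem' := by
    rintro ⟨-, y⟩ ⟨a, rfl, ha⟩
    exact ⟨-a, rfl, by simp [ha]⟩

variable {A : AddSubgroup M} {B : AddSubgroup N} {f : A →+ N ⧸ B}

theorem mem_prodGraph {p : M × N} :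
    p ∈ prodGraph A B f ↔ ∃ a : A, (a : M) = p.1 ∧ (p.2 : N ⧸ B) = f a := Iff.rfl

theorem map_fst_prodGraph : (prodGraph A B f).map (AddMonoidHom.fst M N) = A := by
  ext x
  constructor
  · rintro ⟨⟨-, y⟩, ⟨a, rfl, -⟩, rfl⟩
    exact a.2
  · intro hx
    obtain ⟨y, hy⟩ := QuotientAddGroup.mk_surjective (f ⟨x, hx⟩)
    exact ⟨(x, y), ⟨⟨x, hx⟩, rfl, hy⟩, rfl⟩

theorem goursatSnd_prodGraph : (prodGraph A B f).goursatSnd = B := by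
  ext y
  simp only [mem_goursatSnd, mem_prodGraph]
  constructor
  · rintro ⟨a, ha, hy⟩
    obtain rfl : a = 0 := Subtype.ext ha
    simpa using hy
  · intro hy
    exact ⟨0, rfl, by simpa using hy⟩

theorem prodGraph_injective : Function.Injective (prodGraph A B) := by
  intro f g hfg
  ext a
  obtain ⟨y, hy⟩ := QuotientAddGroup.mk_surjective (f a)
  obtain ⟨a', ha', hy'⟩ : ((a : M), y) ∈ prodGraph A B g := hfg ▸ ⟨a, rfl, hy⟩
  obtain rfl : a' = a := Subtype.ext ha'
  rw [← hy, hy']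

variable (H : AddSubgroup (M × N))

theorem ker_addSubgroupMap_fst_le :
    ((AddMonoidHom.fst M N).addSubgroupMap H).ker ≤
      ((QuotientAddGroup.mk' H.goursatSnd).comp ((AddMonoidHom.snd M N).comp H.subtype)).ker := by
  rintro ⟨⟨x, y⟩, hp⟩ hx
  obtain rfl : x = 0 := congrArg Subtype.val hx
  simpa using hp

noncomputable def graphHom : H.map (AddMonoidHom.fst M N) →+ N ⧸ H.goursatSnd :=
  (AddMonoidHom.fst M N).addSubgroupMap H |>.liftOfSurjective
    (AddMonoidHom.addSubgroupMap_surjective _ _) ⟨_, ker_addSubgroupMap_fst_le H⟩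

theorem graphHom_apply {p : M × N} (hp : p ∈ H) :
    graphHom H ⟨p.1, mem_map_of_mem _ hp⟩ = (p.2 : N ⧸ H.goursatSnd) :=
  AddMonoidHom.liftOfRightInverse_comp_apply _ _ _ ⟨_, ker_addSubgroupMap_fst_le H⟩ ⟨p, hp⟩

theorem prodGraph_graphHom : prodGraph _ _ (graphHom H) = H := by
  ext ⟨x, y⟩
  constructor
  · rintro ⟨a, rfl, hy⟩
    obtain ⟨q, hq, hqa⟩ := mem_map.mp a.2
    obtain rfl : ⟨q.1, mem_map_of_mem _ hq⟩ = a := Subtype.ext hqa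
    rw [graphHom_apply H hq, QuotientAddGroup.eq, mem_goursatSnd] at hy
    convert sub_mem hq hy using 1
    ext <;> simp
  · intro hp
    exact ⟨_, rfl, (graphHom_apply H hp).symm⟩

theorem card_eq_card_map_fst_mul_card_goursatSnd :
    Nat.card H = Nat.card (H.map (AddMonoidHom.fst M N)) * Nat.card H.goursatSnd := by
  set π := (AddMonoidHom.fst M N).addSubgroupMap H
  have hker : π.ker ≃ H.goursatSnd :=
    { toFun x := ⟨x.1.1.2, mem_goursatSnd.2 <| by
        obtain ⟨⟨⟨x, y⟩, hp⟩, hx⟩ := x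
        obtain rfl : x = 0 := congrArg Subtype.val hx
        exact hp⟩
      invFun y := ⟨⟨(0, y), mem_goursatSnd.1 y.2⟩, rfl⟩
      left_inv := by
        rintro ⟨⟨⟨x, y⟩, hp⟩, hx⟩
        obtain rfl : x = 0 := congrArg Subtype.val hx
        rfl
      right_inv _ := rfl }
  rw [card_eq_card_quotient_mul_card_addSubgroup π.ker, Nat.card_congr hker,
    Nat.card_congr (QuotientAddGroup.quotientKerEquivOfSurjective π
      (AddMonoidHom.addSubgroupMap_surjective _ _)).toEquiv]

theorem card_prodGraph (f : A →+ N ⧸ B) :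
    Nat.card (prodGraph A B f) = Nat.card A * Nat.card B := by
  rw [card_eq_card_map_fst_mul_card_goursatSnd, map_fst_prodGraph, goursatSnd_prodGraph]

theorem bijective_prodGraph :
    Function.Bijective fun x : Σ (A : AddSubgroup M) (B : AddSubgroup N), A →+ N ⧸ B =>
      prodGraph x.1 x.2.1 x.2.2 := by
  refine ⟨?_, fun H => ⟨⟨_, _, graphHom H⟩, prodGraph_graphHom H⟩⟩
  rintro ⟨A, B, f⟩ ⟨A', B', f'⟩ (h : prodGraph A B f = prodGraph A' B' f')
  obtain rfl : A = A' := by rw [← map_fst_prodGraph (f := f), h, map_fst_prodGraph]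
  obtain rfl : B = B' := by rw [← goursatSnd_prodGraph (f := f), h, goursatSnd_prodGraph]
  obtain rfl : f = f' := prodGraph_injective h
  rfl

theorem finsum_addSubgroup_prod [Finite M] [Finite N] {R : Type*} [AddCommMonoid R]
    (g : ℕ → R) :
    ∑ᶠ H : AddSubgroup (M × N), g (Nat.card H) =
      ∑ᶠ (A : AddSubgroup M) (B : AddSubgroup N),
        Nat.card (A →+ N ⧸ B) • g (Nat.card A * Nat.card B) := by
  classical
  have := Fintype.ofFinite (AddSubgroup M)
  have := Fintype.ofFinite (AddSubgroup N)
  have := Fintype.ofFinite (AddSubgroup (M × N))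
  have (A : AddSubgroup M) (B : AddSubgroup N) := Fintype.ofFinite (A →+ N ⧸ B)
  simp only [finsum_eq_sum_of_fintype, ← (Equiv.ofBijective _ bijective_prodGraph).sum_comp,
    Fintype.sum_sigma]
  refine sum_congr rfl fun A _ => sum_congr rfl fun B _ => ?_
  simp only [Equiv.ofBijective_apply, card_prodGraph, sum_const, card_univ,
    Nat.card_eq_fintype_card]

end AddSubgroup

instance QuotientAddGroup.isAddCyclic {G : Type*} [AddGroup G] [IsAddCyclic G]
    (N : AddSubgroup G) [N.Normal] : IsAddCyclic (G ⧸ N) :=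
  isAddCyclic_of_surjective _ (QuotientAddGroup.mk'_surjective N)

theorem AddSubgroup.card_quotient_eq_card_div {G : Type*} [AddGroup G] [Finite G]
    (B : AddSubgroup G) : Nat.card (G ⧸ B) = Nat.card G / Nat.card B := by
  rw [B.card_eq_card_quotient_mul_card_addSubgroup, Nat.mul_div_cancel _ Nat.card_pos]

namespace IsAddCyclic

variable {Q : Type*} [AddCommGroup Q] [Finite Q] [IsAddCyclic Q]

theorem card_ker_nsmul_of_dvd {u : ℕ} (hu : u ∣ Nat.card Q) :
    Nat.card (nsmulAddMonoidHom u : Q →+ Q).ker = u := by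
  rw [card_nsmulAddMonoidHom_ker, Nat.gcd_eq_right hu]

theorem eq_ker_nsmul_card (A : AddSubgroup Q) :
    A = (nsmulAddMonoidHom (Nat.card A) : Q →+ Q).ker :=
  AddSubgroup.eq_of_le_of_card_ge
    (fun x hx => congrArg Subtype.val (card_nsmul_eq_zero' (x := (⟨x, hx⟩ : A))))
    (card_ker_nsmul_of_dvd A.card_addSubgroup_dvd_card).le

theorem finsum_addSubgroup {R : Type*} [AddCommMonoid R] (g : ℕ → R) :
    ∑ᶠ A : AddSubgroup Q, g (Nat.card A) = ∑ u ∈ (Nat.card Q).divisors, g u := by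
  have := Fintype.ofFinite (AddSubgroup Q)
  rw [finsum_eq_sum_of_fintype]
  refine sum_nbij' (fun A => Nat.card A) (fun u => (nsmulAddMonoidHom u : Q →+ Q).ker)
    ?_ ?_ ?_ ?_ ?_
  · exact fun A _ => Nat.mem_divisors.2 ⟨A.card_addSubgroup_dvd_card, Nat.card_pos.ne'⟩
  · exact fun _ _ => mem_univ _
  · exact fun A _ => (eq_ker_nsmul_card A).symm
  · exact fun u hu => card_ker_nsmul_of_dvd (Nat.dvd_of_mem_divisors hu)
  · exact fun _ _ => rfl

theorem card_addMonoidHom (A : Type*) [AddGroup A] [IsAddCyclic A] :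
    Nat.card (A →+ Q) = (Nat.card A).gcd (Nat.card Q) := by
  -- `A ≅ ZMod a`, and a homomorphism out of `ZMod a` is its value at `1`: any `q` with `a • q = 0`
  have e : (A →+ Q) ≃ (nsmulAddMonoidHom (Nat.card A) : Q →+ Q).ker :=
    (zmodAddCyclicAddEquiv ‹_›).symm.addMonoidHomCongrLeftEquiv.trans <|
      (ZMod.lift _).symm.trans ((zmultiplesHom Q).subtypeEquiv fun q => by simp).symm
  rw [Nat.card_congr e, card_nsmulAddMonoidHom_ker, Nat.gcd_comm]

end IsAddCyclic

namespace Nat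

variable {R : Type*}

theorem sum_divisors_filter_dvd [AddCommMonoid R] {m d : ℕ} (hd : d ∣ m) (f : ℕ → R) :
    ∑ u ∈ m.divisors with d ∣ u, f u = ∑ e ∈ (m / d).divisors, f (d * e) := by
  obtain ⟨k, rfl⟩ := hd
  rcases Nat.eq_zero_or_pos d with rfl | hd
  · simp
  rw [Nat.mul_div_cancel_left _ hd]
  refine sum_nbij' (· / d) (d * ·) ?_ ?_ ?_ ?_ ?_ <;> simp only [mem_filter, mem_divisors]
  · rintro _ ⟨⟨hu, hk⟩, ⟨e, rfl⟩⟩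
    rw [Nat.mul_div_cancel_left _ hd]
    exact ⟨(Nat.mul_dvd_mul_iff_left hd).mp hu, right_ne_zero_of_mul hk⟩
  · rintro e ⟨he, hk⟩
    exact ⟨⟨Nat.mul_dvd_mul_left d he, mul_ne_zero hd.ne' hk⟩, dvd_mul_right d e⟩
  · rintro _ ⟨-, ⟨e, rfl⟩⟩
    rw [Nat.mul_div_cancel_left _ hd]
  · intro e _
    exact Nat.mul_div_cancel_left _ hd
  · rintro _ ⟨-, ⟨e, rfl⟩⟩
    rw [Nat.mul_div_cancel_left _ hd]

theorem filter_divisors_gcd_dvd_and_dvd {m n u w : ℕ} (hm : m ≠ 0) (hu : u ∣ m)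
    (hw : w ∣ n) :
    {d ∈ (m.gcd n).divisors | d ∣ u ∧ d ∣ w} = (u.gcd w).divisors := by
  simp_rw [← Nat.dvd_gcd_iff]
  exact divisors_filter_dvd_of_dvd (Nat.gcd_ne_zero_left hm)
    (Nat.dvd_gcd ((Nat.gcd_dvd_left u w).trans hu) ((Nat.gcd_dvd_right u w).trans hw))

theorem sum_divisors_sum_divisors_gcd_mul [CommSemiring R] {m n : ℕ} (hm : m ≠ 0)
    (a b : ℕ → R) :
    ∑ u ∈ m.divisors, ∑ w ∈ n.divisors, (u.gcd w : R) * (a u * b w) =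
      ∑ d ∈ (m.gcd n).divisors, (φ d : R) *
        ((∑ e ∈ (m / d).divisors, a (d * e)) * ∑ e ∈ (n / d).divisors, b (d * e)) := by
  have hgcd : ∀ u ∈ m.divisors, ∀ w ∈ n.divisors, (u.gcd w : R) =
      ∑ d ∈ (m.gcd n).divisors, if d ∣ u ∧ d ∣ w then (φ d : R) else 0 := by
    intro u hu w hw
    rw [← sum_filter, filter_divisors_gcd_dvd_and_dvd hm (dvd_of_mem_divisors hu)
      (dvd_of_mem_divisors hw), ← cast_sum, sum_totient]
  calc _ = ∑ u ∈ m.divisors, ∑ w ∈ n.divisors, ∑ d ∈ (m.gcd n).divisors,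
        (φ d : R) * ((if d ∣ u then a u else 0) * (if d ∣ w then b w else 0)) := by
        refine sum_congr rfl fun u hu => sum_congr rfl fun w hw => ?_
        rw [hgcd u hu w hw, sum_mul]
        refine sum_congr rfl fun d _ => ?_
        split_ifs <;> simp_all
    _ = ∑ d ∈ (m.gcd n).divisors, ∑ u ∈ m.divisors, ∑ w ∈ n.divisors,
        (φ d : R) * ((if d ∣ u then a u else 0) * (if d ∣ w then b w else 0)) :=
      (sum_congr rfl fun _ _ => sum_comm).trans sum_comm
    _ = _ := by
      refine sum_congr rfl fun d hd => ?_
      have hdm : d ∣ m := (dvd_of_mem_divisors hd).trans (m.gcd_dvd_left n)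
      have hdn : d ∣ n := (dvd_of_mem_divisors hd).trans (m.gcd_dvd_right n)
      rw [← sum_divisors_filter_dvd hdm, ← sum_divisors_filter_dvd hdn, sum_filter, sum_filter,
        sum_mul_sum, mul_sum]
      simp_rw [mul_sum]

theorem sum_divisors_sum_divisors_gcd_div_mul_cpow {m n : ℕ} (hm : m ≠ 0) (hn : n ≠ 0)
    (t : ℂ) :
    ∑ u ∈ m.divisors, ∑ v ∈ n.divisors, (u.gcd (n / v) : ℂ) * ((u * v : ℕ) : ℂ) ^ t =
      ∑ d ∈ (m.gcd n).divisors, (φ d : ℂ) * (d : ℂ) ^ t *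
        (∑ e ∈ (m / d).divisors, (e : ℂ) ^ t) *
        (∑ e ∈ (n / d).divisors, (e : ℂ) ^ t) := by
  calc _ = ∑ u ∈ m.divisors, ∑ w ∈ n.divisors,
        (u.gcd w : ℂ) * ((u : ℂ) ^ t * ((n / w : ℕ) : ℂ) ^ t) := by
        refine sum_congr rfl fun u _ => ?_
        rw [← Nat.sum_div_divisors n]
        refine sum_congr rfl fun v hv => ?_
        rw [Nat.div_div_self (dvd_of_mem_divisors hv) hn, Nat.cast_mul,
          Complex.natCast_mul_natCast_cpow]
    _ = ∑ d ∈ (m.gcd n).divisors, (φ d : ℂ) *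
          ((∑ e ∈ (m / d).divisors, ((d * e : ℕ) : ℂ) ^ t) *
            ∑ e ∈ (n / d).divisors, ((n / (d * e) : ℕ) : ℂ) ^ t) :=
      sum_divisors_sum_divisors_gcd_mul hm _ _
    _ = _ := by
      refine sum_congr rfl fun d _ => ?_
      rw [← Nat.sum_div_divisors (n / d) (fun e => (e : ℂ) ^ t)]
      simp only [Nat.div_div_eq_div_mul, Nat.cast_mul, Complex.natCast_mul_natCast_cpow,
        ← mul_sum]
      ring

end Nat

theorem sigma_t_subgroups (m n : ℕ) (hm : 0 < m) (hn : 0 < n) (t : ℂ) :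
    (∑ᶠ H : AddSubgroup (ZMod m × ZMod n), (Nat.card H : ℂ) ^ t) =
      ∑ d ∈ (Nat.gcd m n).divisors,
        (Nat.totient d : ℂ) * (d : ℂ) ^ t *
          (∑ e ∈ (m / d).divisors, (e : ℂ) ^ t) *
          (∑ e ∈ (n / d).divisors, (e : ℂ) ^ t) := by
  have : NeZero m := ⟨hm.ne'⟩
  have : NeZero n := ⟨hn.ne'⟩
  calc _ = ∑ᶠ (A : AddSubgroup (ZMod m)) (B : AddSubgroup (ZMod n)),
        (Nat.card A).gcd (n / Nat.card B) • ((Nat.card A * Nat.card B : ℕ) : ℂ) ^ t := by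
        refine (AddSubgroup.finsum_addSubgroup_prod fun k => (k : ℂ) ^ t).trans ?_
        simp_rw [IsAddCyclic.card_addMonoidHom, AddSubgroup.card_quotient_eq_card_div,
          Nat.card_zmod]
    _ = ∑ u ∈ m.divisors, ∑ v ∈ n.divisors,
        u.gcd (n / v) • ((u * v : ℕ) : ℂ) ^ t := by
        refine (IsAddCyclic.finsum_addSubgroup fun u => ∑ᶠ B : AddSubgroup (ZMod n),
          u.gcd (n / Nat.card B) • ((u * Nat.card B : ℕ) : ℂ) ^ t).trans ?_
        rw [Nat.card_zmod]
        refine sum_congr rfl fun u _ => ?_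
        rw [IsAddCyclic.finsum_addSubgroup fun v => u.gcd (n / v) • ((u * v : ℕ) : ℂ) ^ t,
          Nat.card_zmod]
    _ = _ := by
        simp_rw [nsmul_eq_mul]
        exact Nat.sum_divisors_sum_divisors_gcd_div_mul_cpow hm.ne' hn.ne' t
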